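/- arXiv:2502.16249 — 6 statements merged into one kernel-verified Lean document; each statement's English description precedes it below -/
import Mathlib

section
/- Duality between the causal scaled linear-attention RNN and masked attention: for every i with 1 ≤ i ≤ L such that ⟨q_i, z_i⟩ ≠ 0, the RNN output y_i := (q_i^⊤ S_i)^⊤ / ⟨q_i, z_i⟩ satisfies y_i = (Σ_{j=1}^{i} M^C_{ij} ⟨q_i, k_j⟩ v_j) / (Σ_{j=1}^{i} M^C_{ij} ⟨q_i, k_j⟩); i.e., y_i equals the i-th row of Scale(Q K^⊤ ⊙ M^C) V, where Scale divides each row of a matrix by its row sum. -/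
open Matrix Finset

/-- Causal decay mask: `M^C i j = ∏_{t=j+1}^{i} λ_t` for `i ≥ j` and `0` for `i < j`. -/
noncomputable def causalMask (lam : ℕ → ℝ) (i j : ℕ) : ℝ :=
  if j ≤ i then ∏ t ∈ Finset.Icc (j + 1) i, lam t else 0

/-- Duality between the causal scaled linear-attention RNN and masked attention:
the RNN output `y_i = (q_i^⊤ S_i)^⊤ / ⟨q_i, z_i⟩` equals the `i`-th row of
`Scale(Q K^⊤ ⊙ M^C) V`. -/
theorem causal_rnn_attention_duality
    (L d : ℕ) (hL : 0 < L) (hd : 0 < d)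
    (lam : ℕ → ℝ) (q k v : ℕ → (Fin d → ℝ))
    (S : ℕ → Matrix (Fin d) (Fin d) ℝ) (z : ℕ → (Fin d → ℝ))
    (hS0 : S 0 = 0)
    (hS : ∀ i, 1 ≤ i → i ≤ L → S i = lam i • S (i - 1) + vecMulVec (k i) (v i))
    (hz0 : z 0 = 0)
    (hz : ∀ i, 1 ≤ i → i ≤ L → z i = lam i • z (i - 1) + k i) :
    ∀ i, 1 ≤ i → i ≤ L → q i ⬝ᵥ z i ≠ 0 →
      (q i ⬝ᵥ z i)⁻¹ • (q i ᵥ* S i) =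
        (∑ j ∈ Finset.Icc 1 i, causalMask lam i j * (q i ⬝ᵥ k j))⁻¹ •
          ∑ j ∈ Finset.Icc 1 i, (causalMask lam i j * (q i ⬝ᵥ k j)) • v j := by
  have hSclosed : ∀ i, i ≤ L →
      S i = ∑ j ∈ Finset.Icc 1 i, (∏ t ∈ Finset.Icc (j+1) i, lam t) • vecMulVec (k j) (v j) := by
    intro i
    induction i with
    | zero => intro _; simp [hS0]
    | succ n ih =>
      intro hnL
      rw [hS (n+1) (Nat.le_add_left 1 n) hnL]
      simp only [Nat.add_sub_cancel]
      rw [ih (Nat.le_of_succ_le hnL)]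
      rw [Finset.sum_Icc_succ_top (Nat.le_add_left 1 n)]
      simp only [Finset.smul_sum, smul_smul]
      congr 1
      · apply Finset.sum_congr rfl
        intro j hj
        simp only [Finset.mem_Icc] at hj
        rw [mul_comm, ← Finset.prod_Icc_succ_top (by omega : j + 1 ≤ n + 1)]
      · rw [Finset.Icc_eq_empty (by omega)]
        simp
  have hzclosed : ∀ i, i ≤ L →
      z i = ∑ j ∈ Finset.Icc 1 i, (∏ t ∈ Finset.Icc (j+1) i, lam t) • k j := by
    intro i
    induction i with
    | zero => intro _; simp [hz0]
    | succ n ih =>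
      intro hnL
      rw [hz (n+1) (Nat.le_add_left 1 n) hnL]
      simp only [Nat.add_sub_cancel]
      rw [ih (Nat.le_of_succ_le hnL)]
      rw [Finset.sum_Icc_succ_top (Nat.le_add_left 1 n)]
      simp only [Finset.smul_sum, smul_smul]
      congr 1
      · apply Finset.sum_congr rfl
        intro j hj
        simp only [Finset.mem_Icc] at hj
        rw [mul_comm, ← Finset.prod_Icc_succ_top (by omega : j + 1 ≤ n + 1)]
      · rw [Finset.Icc_eq_empty (by omega)]
        simp
  intro i h1 hiL hne
  have hmask : ∀ j ∈ Finset.Icc 1 i, causalMask lam i j = ∏ t ∈ Finset.Icc (j+1) i, lam t := by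
    intro j hj
    simp only [Finset.mem_Icc] at hj
    simp [causalMask, hj.2]
  have hz' : q i ⬝ᵥ z i = ∑ j ∈ Finset.Icc 1 i, causalMask lam i j * (q i ⬝ᵥ k j) := by
    rw [hzclosed i hiL]
    simp only [dotProduct, Finset.sum_apply, Pi.smul_apply, smul_eq_mul, Finset.mul_sum]
    rw [Finset.sum_comm]
    apply Finset.sum_congr rfl
    intro j hj
    rw [hmask j hj]
    exact Finset.sum_congr rfl fun x _ => by ring
  have hS' : q i ᵥ* S i = ∑ j ∈ Finset.Icc 1 i, (causalMask lam i j * (q i ⬝ᵥ k j)) • v j := by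
    rw [hSclosed i hiL]
    ext x
    simp only [vecMul, dotProduct, Matrix.sum_apply, Matrix.smul_apply, vecMulVec_apply,
      Finset.sum_apply, Pi.smul_apply, smul_eq_mul, Finset.mul_sum]
    rw [Finset.sum_comm]
    apply Finset.sum_congr rfl
    intro j hj
    rw [hmask j hj, Finset.sum_mul]
    apply Finset.sum_congr rfl
    intro y _
    ring
  rw [hz', hS']
end

section
/- Scaling-sum identity for the bidirectional recurrences: for every i with 1 ≤ i ≤ L, the corrected scaling scalars satisfy c^F_i + c^B_i = Σ_{j=1}^{L} M_{ij} ⟨q_i, k_j⟩ = ⟨q_i, Σ_{j=1}^{L} M_{ij} k_j⟩. -/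
open Matrix Finset

/-- Bidirectional decay mask: `M i j = ∏_{t=j+1}^{i} λ_t` for `i > j`,
`M i i = 1`, and `M i j = ∏_{t=i+1}^{j} λ_t` for `i < j`. -/
noncomputable def bidirMask (lam : ℕ → ℝ) (i j : ℕ) : ℝ :=
  if j < i then ∏ t ∈ Finset.Icc (j + 1) i, lam t
  else if i < j then ∏ t ∈ Finset.Icc (i + 1) j, lam t
  else 1

lemma dotProduct_sum' {d : ℕ} (x : Fin d → ℝ) (s : Finset ℕ) (f : ℕ → Fin d → ℝ) :
    x ⬝ᵥ (∑ j ∈ s, f j) = ∑ j ∈ s, x ⬝ᵥ f j := by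
  simp only [dotProduct, Finset.sum_apply, Finset.mul_sum]
  rw [Finset.sum_comm]

/-- Scaling-sum identity for the bidirectional recurrences:
`c^F_i + c^B_i = Σ_{j=1}^{L} M_{ij} ⟨q_i, k_j⟩ = ⟨q_i, Σ_{j=1}^{L} M_{ij} k_j⟩`. -/
theorem scaling_sum_identity
    (L d : ℕ) (hL : 0 < L) (hd : 0 < d)
    (lam : ℕ → ℝ) (q k : ℕ → (Fin d → ℝ))
    (zF zB : ℕ → (Fin d → ℝ))
    (hzF0 : zF 0 = 0)
    (hzF : ∀ i, 1 ≤ i → i ≤ L → zF i = lam i • zF (i - 1) + k i)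
    (hzBL : zB L = k L)
    (hzB : ∀ i, 1 ≤ i → i < L → zB i = lam (i + 1) • zB (i + 1) + k i)
    (cF cB : ℕ → ℝ)
    (hcF : ∀ i, cF i = q i ⬝ᵥ zF i - (1 / 2) * (q i ⬝ᵥ k i))
    (hcB : ∀ i, cB i = q i ⬝ᵥ zB i - (1 / 2) * (q i ⬝ᵥ k i)) :
    ∀ i, 1 ≤ i → i ≤ L →
      cF i + cB i = ∑ j ∈ Finset.Icc 1 L, bidirMask lam i j * (q i ⬝ᵥ k j)
      ∧ cF i + cB i = q i ⬝ᵥ (∑ j ∈ Finset.Icc 1 L, bidirMask lam i j • k j) := by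
  -- closed form for the forward recurrence
  have hF : ∀ i, i ≤ L → zF i = ∑ j ∈ Icc 1 i, (∏ t ∈ Icc (j + 1) i, lam t) • k j := by
    intro i
    induction i with
    | zero => intro _; simp [hzF0]
    | succ n ih =>
      intro hn
      have hins : Icc 1 (n + 1) = insert (n + 1) (Icc 1 n) := by
        ext x; simp [Finset.mem_Icc, Finset.mem_insert]; omega
      rw [hzF (n + 1) (by omega) hn]
      simp only [Nat.add_sub_cancel]
      rw [ih (by omega), Finset.smul_sum, hins, Finset.sum_insert (by simp)]
      have h1 : (∏ t ∈ Icc (n + 1 + 1) (n + 1), lam t) • k (n + 1) = k (n + 1) := by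
        rw [Finset.Icc_eq_empty (by omega)]; simp
      rw [h1, add_comm]
      congr 1
      apply Finset.sum_congr rfl
      intro j hj
      simp only [Finset.mem_Icc] at hj
      rw [smul_smul]
      congr 1
      rw [Finset.prod_Icc_succ_top (by omega : j + 1 ≤ n + 1), mul_comm]
  -- closed form for the backward recurrence
  have hB : ∀ m, ∀ i, 1 ≤ i → i + m = L →
      zB i = ∑ j ∈ Icc i L, (∏ t ∈ Icc (i + 1) j, lam t) • k j := by
    intro m
    induction m with
    | zero =>
      intro i h1 h2
      subst h2
      simp only [Nat.add_zero] at *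
      rw [hzBL, Finset.Icc_self, Finset.sum_singleton,
        Finset.Icc_eq_empty (by omega)]
      simp
    | succ n ih =>
      intro i h1 h2
      have hrec := hzB i h1 (by omega)
      rw [hrec, ih (i + 1) (by omega) (by omega), Finset.smul_sum]
      have hins : Icc i L = insert i (Icc (i + 1) L) := by
        ext x; simp [Finset.mem_Icc, Finset.mem_insert]; omega
      rw [hins, Finset.sum_insert (by simp), add_comm]
      have h1' : (∏ t ∈ Icc (i + 1) i, lam t) • k i = k i := by
        rw [Finset.Icc_eq_empty (by omega)]; simp
      rw [h1']
      congr 1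
      apply Finset.sum_congr rfl
      intro j hj
      rw [smul_smul]
      congr 1
      have hij : i + 1 ≤ j := by simp at hj; omega
      rw [← Finset.mul_prod_Ioc_eq_prod_Icc hij, Finset.Icc_add_one_left_eq_Ioc]
  intro i hi1 hiL
  have hzFi := hF i hiL
  have hzBi := hB (L - i) i hi1 (by omega)
  -- dot products as sums
  have hqF : q i ⬝ᵥ zF i = ∑ j ∈ Icc 1 i, (∏ t ∈ Icc (j + 1) i, lam t) * (q i ⬝ᵥ k j) := by
    rw [hzFi, dotProduct_sum']
    exact Finset.sum_congr rfl fun j _ => by rw [dotProduct_smul, smul_eq_mul]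
  have hqB : q i ⬝ᵥ zB i = ∑ j ∈ Icc i L, (∏ t ∈ Icc (i + 1) j, lam t) * (q i ⬝ᵥ k j) := by
    rw [hzBi, dotProduct_sum']
    exact Finset.sum_congr rfl fun j _ => by rw [dotProduct_smul, smul_eq_mul]
  -- split the mask sum
  have hsplit : ∑ j ∈ Icc 1 L, bidirMask lam i j * (q i ⬝ᵥ k j)
      = ∑ j ∈ Ico 1 i, bidirMask lam i j * (q i ⬝ᵥ k j)
        + ∑ j ∈ Icc i L, bidirMask lam i j * (q i ⬝ᵥ k j) := by
    rw [← Finset.sum_union (by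
      simp only [Finset.disjoint_left, Finset.mem_Ico, Finset.mem_Icc]
      intro a ha hb; omega)]
    congr 1
    ext x; simp [Finset.mem_Icc, Finset.mem_Ico, Finset.mem_union]; omega
  have hFsplit : ∑ j ∈ Icc 1 i, (∏ t ∈ Icc (j + 1) i, lam t) * (q i ⬝ᵥ k j)
      = ∑ j ∈ Ico 1 i, (∏ t ∈ Icc (j + 1) i, lam t) * (q i ⬝ᵥ k j) + (q i ⬝ᵥ k i) := by
    have hins : Icc 1 i = insert i (Ico 1 i) := by
      ext x; simp [Finset.mem_Icc, Finset.mem_Ico, Finset.mem_insert]; omega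
    rw [hins, Finset.sum_insert (by simp), Finset.Icc_eq_empty (by omega), add_comm]
    simp
  have key : cF i + cB i = ∑ j ∈ Icc 1 L, bidirMask lam i j * (q i ⬝ᵥ k j) := by
    rw [hcF, hcB, hqF, hqB, hFsplit, hsplit]
    have e1 : ∀ j ∈ Ico 1 i, bidirMask lam i j * (q i ⬝ᵥ k j)
        = (∏ t ∈ Icc (j + 1) i, lam t) * (q i ⬝ᵥ k j) := by
      intro j hj
      simp only [Finset.mem_Ico] at hj
      rw [bidirMask, if_pos (by omega)]
    have e2 : ∀ j ∈ Icc i L, bidirMask lam i j * (q i ⬝ᵥ k j)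
        = (∏ t ∈ Icc (i + 1) j, lam t) * (q i ⬝ᵥ k j) := by
      intro j hj
      simp only [Finset.mem_Icc] at hj
      rcases eq_or_lt_of_le hj.1 with h | h
      · subst h
        rw [bidirMask, if_neg (by omega), if_neg (by omega),
          Finset.Icc_eq_empty (by omega)]
        simp
      · rw [bidirMask, if_neg (by omega), if_pos h]
    rw [Finset.sum_congr rfl e1, Finset.sum_congr rfl e2]
    ring
  refine ⟨key, ?_⟩
  rw [key, dotProduct_sum']
  exact Finset.sum_congr rfl fun j _ => by rw [dotProduct_smul, smul_eq_mul]
end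

section
/- Output-sum identity for the bidirectional recurrences: for every i with 1 ≤ i ≤ L, the corrected forward and backward outputs satisfy y^F_i + y^B_i = Σ_{j=1}^{L} M_{ij} ⟨q_i, k_j⟩ v_j; i.e., the sum of the two corrected recurrent outputs equals the i-th row of (Q K^⊤ ⊙ M) V. -/
/-!
Unrolling the forward recurrence gives `S^F_i = ∑_{j ≤ i} M_{ij} k_j v_jᵀ` and unrolling the
backward one gives `S^B_i = ∑_{j ≥ i} M_{ij} k_j v_jᵀ`. Together the two sums cover every `j`
once, except the diagonal term `⟨q_i, k_i⟩ v_i`, which is counted twice; the two halves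
subtracted in the corrected outputs remove exactly one copy of it.
-/

open Matrix Finset

section LinearRecurrence

variable {R M : Type*} [CommSemiring R] [AddCommMonoid M] [Module R M]

theorem eq_sum_of_forward_recurrence (lam : ℕ → R) (x S : ℕ → M) (n : ℕ) (h0 : S 0 = 0)
    (hS : ∀ i, 1 ≤ i → i ≤ n → S i = lam i • S (i - 1) + x i) :
    S n = ∑ j ∈ Icc 1 n, (∏ t ∈ Icc (j + 1) n, lam t) • x j := by
  induction n with
  | zero => simp [h0]
  | succ n ih =>
    rw [hS (n + 1) le_add_self le_rfl, Nat.add_sub_cancel,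
      ih fun i hi1 hin => hS i hi1 (hin.trans n.le_succ), sum_Icc_succ_top le_add_self,
      Icc_eq_empty_of_lt (Nat.lt_succ_self _), prod_empty, one_smul, smul_sum]
    congr 1
    refine sum_congr rfl fun j hj => ?_
    rw [prod_Icc_succ_top (by simpa using (mem_Icc.1 hj).2), mul_comm, smul_smul]

theorem eq_sum_of_backward_recurrence (lam : ℕ → R) (x S : ℕ → M) {m n : ℕ} (hn : S n = x n)
    (hS : ∀ i, m ≤ i → i < n → S i = lam (i + 1) • S (i + 1) + x i)
    {i : ℕ} (hmi : m ≤ i) (hin : i ≤ n) :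
    S i = ∑ j ∈ Icc i n, (∏ t ∈ Icc (i + 1) j, lam t) • x j := by
  induction hin using Nat.decreasingInduction with
  | self => simp [hn]
  | of_succ k hkn ih =>
    rw [hS k hmi hkn, ih (hmi.trans k.le_succ), smul_sum, ← add_sum_Ioc_eq_sum_Icc hkn.le,
      Icc_eq_empty_of_lt (Nat.lt_succ_self _), prod_empty, one_smul, add_comm,
      ← Icc_add_one_left_eq_Ioc]
    congr 1
    refine sum_congr rfl fun j hj => ?_
    rw [smul_smul, Icc_add_one_left_eq_Ioc, mul_prod_Ioc_eq_prod_Icc (mem_Icc.1 hj).1]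

end LinearRecurrence

theorem Finset.sum_Icc_add_sum_Icc {G : Type*} [AddCommMonoid G] (f : ℕ → G) {a i b : ℕ}
    (hai : a ≤ i) (hib : i ≤ b) :
    ∑ j ∈ Icc a i, f j + ∑ j ∈ Icc i b, f j = ∑ j ∈ Icc a b, f j + f i := by
  rw [← Ico_add_one_right_eq_Icc, ← Ico_add_one_right_eq_Icc, ← Ico_add_one_right_eq_Icc,
    sum_Ico_succ_top hai, add_right_comm,
    sum_Ico_consecutive f hai (hib.trans (Nat.le_add_right b 1))]

theorem Matrix.vecMul_sum_smul_vecMulVec {α ι n : Type*} [CommSemiring α] [Fintype n]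
    (s : Finset ι) (c : ι → α) (q : n → α) (k v : ι → n → α) :
    q ᵥ* ∑ j ∈ s, c j • vecMulVec (k j) (v j) = ∑ j ∈ s, (c j * (q ⬝ᵥ k j)) • v j := by
  simp only [vecMul_sum, vecMul_smul, vecMul_vecMulVec, smul_smul]

theorem bidirMask_of_le (lam : ℕ → ℝ) {i j : ℕ} (h : j ≤ i) :
    bidirMask lam i j = ∏ t ∈ Icc (j + 1) i, lam t := by
  unfold bidirMask
  split_ifs with hji hij
  · rfl
  · omega
  · simp [le_antisymm h (not_lt.1 hji)]

theorem bidirMask_of_ge (lam : ℕ → ℝ) {i j : ℕ} (h : i ≤ j) :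
    bidirMask lam i j = ∏ t ∈ Icc (i + 1) j, lam t := by
  unfold bidirMask
  split_ifs with hji hij
  · omega
  · rfl
  · simp [le_antisymm h (not_lt.1 hij)]

theorem output_sum_identity_general
    (L d : ℕ)
    (lam : ℕ → ℝ) (q k v : ℕ → (Fin d → ℝ))
    (SF SB : ℕ → Matrix (Fin d) (Fin d) ℝ)
    (hSF0 : SF 0 = 0)
    (hSF : ∀ i, 1 ≤ i → i ≤ L → SF i = lam i • SF (i - 1) + vecMulVec (k i) (v i))
    (hSBL : SB L = vecMulVec (k L) (v L))
    (hSB : ∀ i, 1 ≤ i → i < L → SB i = lam (i + 1) • SB (i + 1) + vecMulVec (k i) (v i))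
    (yF yB : ℕ → (Fin d → ℝ))
    (hyF : ∀ i, yF i = q i ᵥ* SF i - ((1 / 2) * (q i ⬝ᵥ k i)) • v i)
    (hyB : ∀ i, yB i = q i ᵥ* SB i - ((1 / 2) * (q i ⬝ᵥ k i)) • v i) :
    ∀ i, 1 ≤ i → i ≤ L →
      yF i + yB i = ∑ j ∈ Finset.Icc 1 L, (bidirMask lam i j * (q i ⬝ᵥ k j)) • v j := by
  intro i hi hiL
  set y := fun j => (bidirMask lam i j * (q i ⬝ᵥ k j)) • v j
  have hF : q i ᵥ* SF i = ∑ j ∈ Icc 1 i, y j := by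
    rw [eq_sum_of_forward_recurrence lam _ SF i hSF0 fun j hj hji => hSF j hj (hji.trans hiL),
      vecMul_sum_smul_vecMulVec]
    exact sum_congr rfl fun j hj => by simp only [y, bidirMask_of_le lam (mem_Icc.1 hj).2]
  have hB : q i ᵥ* SB i = ∑ j ∈ Icc i L, y j := by
    rw [eq_sum_of_backward_recurrence lam _ SB hSBL hSB hi hiL, vecMul_sum_smul_vecMulVec]
    exact sum_congr rfl fun j hj => by simp only [y, bidirMask_of_ge lam (mem_Icc.1 hj).1]
  have hdiag : y i = (q i ⬝ᵥ k i) • v i := by simp [y, bidirMask]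
  have hsplit := sum_Icc_add_sum_Icc y hi hiL
  rw [hyF, hyB, hF, hB]
  linear_combination (norm := module) hsplit + hdiag

/-- Output-sum identity for the bidirectional recurrences:
`y^F_i + y^B_i = Σ_{j=1}^{L} M_{ij} ⟨q_i, k_j⟩ v_j`, i.e. the sum of the corrected
recurrent outputs equals the `i`-th row of `(Q K^⊤ ⊙ M) V`. -/
theorem output_sum_identity
    (L d : ℕ) (hL : 0 < L) (hd : 0 < d)
    (lam : ℕ → ℝ) (q k v : ℕ → (Fin d → ℝ))
    (SF SB : ℕ → Matrix (Fin d) (Fin d) ℝ)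
    (hSF0 : SF 0 = 0)
    (hSF : ∀ i, 1 ≤ i → i ≤ L → SF i = lam i • SF (i - 1) + vecMulVec (k i) (v i))
    (hSBL : SB L = vecMulVec (k L) (v L))
    (hSB : ∀ i, 1 ≤ i → i < L → SB i = lam (i + 1) • SB (i + 1) + vecMulVec (k i) (v i))
    (yF yB : ℕ → (Fin d → ℝ))
    (hyF : ∀ i, yF i = q i ᵥ* SF i - ((1 / 2) * (q i ⬝ᵥ k i)) • v i)
    (hyB : ∀ i, yB i = q i ᵥ* SB i - ((1 / 2) * (q i ⬝ᵥ k i)) • v i) :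
    ∀ i, 1 ≤ i → i ≤ L →
      yF i + yB i = ∑ j ∈ Finset.Icc 1 L, (bidirMask lam i j * (q i ⬝ᵥ k j)) • v j :=
  output_sum_identity_general L d lam q k v SF SB hSF0 hSF hSBL hSB yF yB hyF hyB
end

section
/- Scale-before-mask variant of the bidirectional equivalence: define undecayed scaling recurrences z̃^F_0 = 0, z̃^F_i = z̃^F_{i−1} + k_i and z̃^B_L = k_L, z̃^B_i = z̃^B_{i+1} + k_i, with corrected scalars c̃^F_i = ⟨q_i, z̃^F_i⟩ − (1/2)⟨q_i, k_i⟩ and c̃^B_i = ⟨q_i, z̃^B_i⟩ − (1/2)⟨q_i, k_i⟩. Then for every i, c̃^F_i + c̃^B_i = ⟨q_i, Σ_{j=1}^{L} k_j⟩, and if this quantity is nonzero, (y^F_i + y^B_i)/(c̃^F_i + c̃^B_i) = (Σ_{j=1}^{L} M_{ij} ⟨q_i, k_j⟩ v_j) / ⟨q_i, Σ_{j=1}^{L} k_j⟩; i.e., it equals the i-th row of (Scale(Q K^⊤) ⊙ M) V. -/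
open Matrix Finset

private lemma vecMul_sum' {d : ℕ} (s : Finset ℕ) (q : Fin d → ℝ)
    (f : ℕ → Matrix (Fin d) (Fin d) ℝ) :
    q ᵥ* ∑ j ∈ s, f j = ∑ j ∈ s, q ᵥ* f j := by
  funext x
  simp only [vecMul, dotProduct, Finset.sum_apply, Matrix.sum_apply, Finset.mul_sum]
  rw [Finset.sum_comm]

private lemma vecMul_smul' {d : ℕ} (c : ℝ) (q : Fin d → ℝ)
    (A : Matrix (Fin d) (Fin d) ℝ) : q ᵥ* (c • A) = c • (q ᵥ* A) := by
  funext x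
  simp [vecMul, dotProduct, Finset.mul_sum]
  ring_nf
  exact Finset.sum_congr rfl fun i _ => by ring

private lemma vecMul_vecMulVec' {d : ℕ} (q a b : Fin d → ℝ) :
    q ᵥ* vecMulVec a b = (q ⬝ᵥ a) • b := by
  funext j; simp [vecMul, vecMulVec, dotProduct, Finset.sum_mul, mul_assoc]

private lemma bidirMask_le (lam : ℕ → ℝ) {i j : ℕ} (h : j ≤ i) :
    bidirMask lam i j = ∏ t ∈ Finset.Icc (j + 1) i, lam t := by
  rcases lt_or_eq_of_le h with h' | h'
  · simp [bidirMask, h']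
  · subst h'; simp [bidirMask]

private lemma bidirMask_ge (lam : ℕ → ℝ) {i j : ℕ} (h : i ≤ j) :
    bidirMask lam i j = ∏ t ∈ Finset.Icc (i + 1) j, lam t := by
  rcases lt_or_eq_of_le h with h' | h'
  · simp [bidirMask, h', not_lt_of_gt h']
  · subst h'; simp [bidirMask]

/-- Scale-before-mask variant of the bidirectional equivalence: with undecayed
scaling recurrences, `c̃^F_i + c̃^B_i = ⟨q_i, Σ_j k_j⟩`, and if this is nonzero then
`(y^F_i + y^B_i)/(c̃^F_i + c̃^B_i)` equals the `i`-th row of `(Scale(Q K^⊤) ⊙ M) V`. -/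
theorem scale_before_mask_equivalence
    (L d : ℕ) (hL : 0 < L) (hd : 0 < d)
    (lam : ℕ → ℝ) (q k v : ℕ → (Fin d → ℝ))
    (SF SB : ℕ → Matrix (Fin d) (Fin d) ℝ) (ztF ztB : ℕ → (Fin d → ℝ))
    (hSF0 : SF 0 = 0)
    (hSF : ∀ i, 1 ≤ i → i ≤ L → SF i = lam i • SF (i - 1) + vecMulVec (k i) (v i))
    (hSBL : SB L = vecMulVec (k L) (v L))
    (hSB : ∀ i, 1 ≤ i → i < L → SB i = lam (i + 1) • SB (i + 1) + vecMulVec (k i) (v i))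
    (hztF0 : ztF 0 = 0)
    (hztF : ∀ i, 1 ≤ i → i ≤ L → ztF i = ztF (i - 1) + k i)
    (hztBL : ztB L = k L)
    (hztB : ∀ i, 1 ≤ i → i < L → ztB i = ztB (i + 1) + k i)
    (yF yB : ℕ → (Fin d → ℝ)) (ctF ctB : ℕ → ℝ)
    (hyF : ∀ i, yF i = q i ᵥ* SF i - ((1 / 2) * (q i ⬝ᵥ k i)) • v i)
    (hyB : ∀ i, yB i = q i ᵥ* SB i - ((1 / 2) * (q i ⬝ᵥ k i)) • v i)
    (hctF : ∀ i, ctF i = q i ⬝ᵥ ztF i - (1 / 2) * (q i ⬝ᵥ k i))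
    (hctB : ∀ i, ctB i = q i ⬝ᵥ ztB i - (1 / 2) * (q i ⬝ᵥ k i)) :
    ∀ i, 1 ≤ i → i ≤ L →
      ctF i + ctB i = q i ⬝ᵥ (∑ j ∈ Finset.Icc 1 L, k j)
      ∧ (q i ⬝ᵥ (∑ j ∈ Finset.Icc 1 L, k j) ≠ 0 →
          (ctF i + ctB i)⁻¹ • (yF i + yB i) =
            (q i ⬝ᵥ (∑ j ∈ Finset.Icc 1 L, k j))⁻¹ •
              ∑ j ∈ Finset.Icc 1 L, (bidirMask lam i j * (q i ⬝ᵥ k j)) • v j) := by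
  -- closed form for SF
  have hSFc : ∀ i, i ≤ L →
      SF i = ∑ j ∈ Finset.Icc 1 i,
        (∏ t ∈ Finset.Icc (j + 1) i, lam t) • vecMulVec (k j) (v j) := by
    intro i
    induction i with
    | zero => intro _; simp [hSF0]
    | succ n ih =>
      intro hle
      rw [hSF (n + 1) (Nat.succ_le_succ (Nat.zero_le n)) hle]
      simp only [Nat.add_sub_cancel]
      rw [ih (Nat.le_of_succ_le hle)]
      rw [show Finset.Icc 1 (n + 1) = insert (n + 1) (Finset.Icc 1 n) by
        ext x; simp [Finset.mem_Icc]; omega]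
      rw [Finset.sum_insert (by simp)]
      rw [Finset.smul_sum]
      rw [show (Finset.Icc (n + 1 + 1) (n + 1)) = ∅ by
        simp [Finset.Icc_eq_empty_of_lt]]
      simp only [Finset.prod_empty, one_smul]
      rw [add_comm]
      congr 1
      refine Finset.sum_congr rfl fun j hj => ?_
      rw [Finset.mem_Icc] at hj
      rw [smul_smul]
      congr 1
      rw [show Finset.Icc (j + 1) (n + 1) = insert (n + 1) (Finset.Icc (j + 1) n) by
        have := hj.2; ext x; simp [Finset.mem_Icc]; omega]
      rw [Finset.prod_insert (by simp)]
  -- closed form for ztF (same induction)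
  have hztFc : ∀ i, i ≤ L → ztF i = ∑ j ∈ Finset.Icc 1 i, k j := by
    intro i
    induction i with
    | zero => intro _; simp [hztF0]
    | succ n ih =>
      intro hle
      rw [hztF (n + 1) (Nat.succ_le_succ (Nat.zero_le n)) hle]
      simp only [Nat.add_sub_cancel]
      rw [ih (Nat.le_of_succ_le hle)]
      rw [show Finset.Icc 1 (n + 1) = insert (n + 1) (Finset.Icc 1 n) by
        ext x; simp [Finset.mem_Icc]; omega]
      rw [Finset.sum_insert (by simp), add_comm]
  -- closed form for SB: downward induction
  have hSBc : ∀ n i, i + n = L → 1 ≤ i →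
      SB i = ∑ j ∈ Finset.Icc i L,
        (∏ t ∈ Finset.Icc (i + 1) j, lam t) • vecMulVec (k j) (v j) := by
    intro n
    induction n with
    | zero =>
      intro i hiL _
      simp only [Nat.add_zero] at hiL; subst hiL
      simp [hSBL, Finset.Icc_self, Finset.Icc_eq_empty_of_lt]
    | succ m ih =>
      intro i hiL hi1
      have hlt : i < L := by omega
      rw [hSB i hi1 hlt, ih (i + 1) (by omega) (by omega)]
      rw [Finset.smul_sum]
      rw [show Finset.Icc i L = insert i (Finset.Icc (i + 1) L) by
        ext x; simp [Finset.mem_Icc]; omega]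
      rw [Finset.sum_insert (by simp)]
      rw [show Finset.Icc (i + 1) i = ∅ by simp [Finset.Icc_eq_empty_of_lt]]
      simp only [Finset.prod_empty, one_smul]
      rw [add_comm]
      congr 1
      refine Finset.sum_congr rfl fun j hj => ?_
      rw [Finset.mem_Icc] at hj
      rw [smul_smul]
      congr 1
      rw [show Finset.Icc (i + 1) j = insert (i + 1) (Finset.Icc (i + 2) j) by
        have := hj.1; ext x; simp [Finset.mem_Icc]; omega]
      rw [Finset.prod_insert (by simp)]
  have hztBc : ∀ n i, i + n = L → 1 ≤ i → ztB i = ∑ j ∈ Finset.Icc i L, k j := by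
    intro n
    induction n with
    | zero =>
      intro i hiL _
      simp only [Nat.add_zero] at hiL; subst hiL
      simp [hztBL]
    | succ m ih =>
      intro i hiL hi1
      have hlt : i < L := by omega
      rw [hztB i hi1 hlt, ih (i + 1) (by omega) (by omega)]
      rw [show Finset.Icc i L = insert i (Finset.Icc (i + 1) L) by
        ext x; simp [Finset.mem_Icc]; omega]
      rw [Finset.sum_insert (by simp), add_comm]
  intro i hi1 hiL
  have hsplit : Finset.Icc 1 L = Finset.Icc 1 i ∪ Finset.Icc (i + 1) L := by
    ext x; simp [Finset.mem_Icc, Finset.mem_union]; omega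
  have hdisj : Disjoint (Finset.Icc 1 i) (Finset.Icc (i + 1) L) := by
    simp [Finset.disjoint_left, Finset.mem_Icc]; omega
  have hIccB : Finset.Icc i L = insert i (Finset.Icc (i + 1) L) := by
    ext x; simp [Finset.mem_Icc]; omega
  -- the scalar identity
  have hc : ctF i + ctB i = q i ⬝ᵥ (∑ j ∈ Finset.Icc 1 L, k j) := by
    rw [hctF, hctB, hztFc i hiL, hztBc (L - i) i (by omega) hi1]
    rw [hsplit, Finset.sum_union hdisj, hIccB, Finset.sum_insert (by simp)]
    simp only [dotProduct_add]
    ring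
  refine ⟨hc, fun hne => ?_⟩
  rw [hc]
  congr 1
  -- vector identity: yF i + yB i = ∑ j ∈ Icc 1 L, (M i j * ⟨q i, k j⟩) • v j
  rw [hyF, hyB, hSFc i hiL, hSBc (L - i) i (by omega) hi1]
  rw [vecMul_sum', vecMul_sum']
  have hF : ∀ j ∈ Finset.Icc 1 i,
      q i ᵥ* ((∏ t ∈ Finset.Icc (j + 1) i, lam t) • vecMulVec (k j) (v j))
        = (bidirMask lam i j * (q i ⬝ᵥ k j)) • v j := by
    intro j hj
    rw [Finset.mem_Icc] at hj
    rw [vecMul_smul', vecMul_vecMulVec', smul_smul, bidirMask_le lam hj.2]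
  have hB : ∀ j ∈ Finset.Icc i L,
      q i ᵥ* ((∏ t ∈ Finset.Icc (i + 1) j, lam t) • vecMulVec (k j) (v j))
        = (bidirMask lam i j * (q i ⬝ᵥ k j)) • v j := by
    intro j hj
    rw [Finset.mem_Icc] at hj
    rw [vecMul_smul', vecMul_vecMulVec', smul_smul, bidirMask_ge lam hj.1]
  rw [Finset.sum_congr rfl hF, Finset.sum_congr rfl hB]
  rw [hsplit, Finset.sum_union hdisj, hIccB, Finset.sum_insert (by simp)]
  have hMii : bidirMask lam i i = 1 := by simp [bidirMask]
  rw [hMii]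
  funext x
  simp only [Pi.add_apply, Pi.sub_apply, Pi.smul_apply, Finset.sum_apply, smul_eq_mul,
    one_mul]
  ring
end

section
/- LION-lit mapping (bidirectional vanilla linear attention): if λ_i = 1 for all i, then for every i the corrected outputs satisfy y^F_i + y^B_i = Σ_{j=1}^{L} ⟨q_i, k_j⟩ v_j and c^F_i + c^B_i = Σ_{j=1}^{L} ⟨q_i, k_j⟩; hence the non-scaled stacked outputs equal Q K^⊤ V, and whenever Σ_{j=1}^{L} ⟨q_i, k_j⟩ ≠ 0 the scaled output (y^F_i + y^B_i)/(c^F_i + c^B_i) equals the i-th row of Scale(Q K^⊤) V. -/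
open Matrix Finset

/-!
Unrolling the forward and backward recurrences gives the prefix sum `S^F_i = ∑_{j ≤ i} k_j v_jᵀ`
and the suffix sum `S^B_i = ∑_{j ≥ i} k_j v_jᵀ` (likewise for `z`). Their sum counts every
`j` once except `j = i`, which is counted twice; the two corrections `-(1/2)⟨q_i, k_i⟩ v_i`
remove exactly that extra diagonal term.
-/

section IntervalSums

variable {M : Type*} [AddCommMonoid M]

theorem eq_sum_Icc_one_of_forward_recurrence {L : ℕ} {f g : ℕ → M} (h0 : f 0 = 0)
    (hstep : ∀ i, 1 ≤ i → i ≤ L → f i = f (i - 1) + g i) {i : ℕ} (hi : i ≤ L) :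
    f i = ∑ j ∈ Icc 1 i, g j := by
  induction i with
  | zero => simp [h0]
  | succ n ih =>
    rw [hstep (n + 1) n.succ_pos hi, Nat.add_sub_cancel, ih (by omega),
      sum_Icc_succ_top (by omega)]

theorem eq_sum_Icc_of_backward_recurrence {L : ℕ} {f g : ℕ → M} (hL : f L = g L)
    (hstep : ∀ i, 1 ≤ i → i < L → f i = f (i + 1) + g i) {i : ℕ} (h1 : 1 ≤ i) (hi : i ≤ L) :
    f i = ∑ j ∈ Icc i L, g j := by
  induction hi using Nat.decreasingInduction with
  | self => simp [hL]
  | of_succ n hn ih =>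
    rw [hstep n h1 hn, ih (by omega), ← insert_Icc_add_one_left_eq_Icc hn.le,
      sum_insert (by simp), add_comm]

theorem sum_Icc_add_sum_Icc_eq_add {a i b : ℕ} (hai : a ≤ i) (hib : i ≤ b) (g : ℕ → M) :
    ∑ j ∈ Icc a i, g j + ∑ j ∈ Icc i b, g j = ∑ j ∈ Icc a b, g j + g i := by
  simp only [← Ico_add_one_right_eq_Icc]
  rw [sum_eq_sum_Ico_succ_bot (show i < b + 1 by omega), add_left_comm,
    sum_Ico_consecutive _ (by omega) (by omega), add_comm]

end IntervalSums

theorem sum_Icc_sub_half_add_sum_Icc_sub_half {N : Type*} [AddCommGroup N] [Module ℝ N]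
    {a i b : ℕ} (hai : a ≤ i) (hib : i ≤ b) (x : ℕ → N) :
    (∑ j ∈ Icc a i, x j - (1 / 2 : ℝ) • x i) + (∑ j ∈ Icc i b, x j - (1 / 2 : ℝ) • x i) =
      ∑ j ∈ Icc a b, x j := by
  have hsplit := sum_Icc_add_sum_Icc_eq_add hai hib x
  calc _ = (∑ j ∈ Icc a i, x j + ∑ j ∈ Icc i b, x j) - x i := by module
    _ = _ := by rw [hsplit, add_sub_cancel_right]

theorem lion_lit_mapping_general
    (L d : ℕ)
    (q k v : ℕ → (Fin d → ℝ))
    (SF SB : ℕ → Matrix (Fin d) (Fin d) ℝ) (zF zB : ℕ → (Fin d → ℝ))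
    (hSF0 : SF 0 = 0)
    (hSF : ∀ i, 1 ≤ i → i ≤ L → SF i = SF (i - 1) + vecMulVec (k i) (v i))
    (hzF0 : zF 0 = 0)
    (hzF : ∀ i, 1 ≤ i → i ≤ L → zF i = zF (i - 1) + k i)
    (hSBL : SB L = vecMulVec (k L) (v L))
    (hSB : ∀ i, 1 ≤ i → i < L → SB i = SB (i + 1) + vecMulVec (k i) (v i))
    (hzBL : zB L = k L)
    (hzB : ∀ i, 1 ≤ i → i < L → zB i = zB (i + 1) + k i)
    (yF yB : ℕ → (Fin d → ℝ)) (cF cB : ℕ → ℝ)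
    (hyF : ∀ i, yF i = q i ᵥ* SF i - ((1 / 2) * (q i ⬝ᵥ k i)) • v i)
    (hyB : ∀ i, yB i = q i ᵥ* SB i - ((1 / 2) * (q i ⬝ᵥ k i)) • v i)
    (hcF : ∀ i, cF i = q i ⬝ᵥ zF i - (1 / 2) * (q i ⬝ᵥ k i))
    (hcB : ∀ i, cB i = q i ⬝ᵥ zB i - (1 / 2) * (q i ⬝ᵥ k i)) :
    ∀ i, 1 ≤ i → i ≤ L →
      yF i + yB i = ∑ j ∈ Finset.Icc 1 L, (q i ⬝ᵥ k j) • v j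
      ∧ cF i + cB i = ∑ j ∈ Finset.Icc 1 L, (q i ⬝ᵥ k j)
      ∧ ((∑ j ∈ Finset.Icc 1 L, (q i ⬝ᵥ k j)) ≠ 0 →
          (cF i + cB i)⁻¹ • (yF i + yB i) =
            (∑ j ∈ Finset.Icc 1 L, (q i ⬝ᵥ k j))⁻¹ •
              ∑ j ∈ Finset.Icc 1 L, (q i ⬝ᵥ k j) • v j) := by
  intro i h1 hi
  have hy : yF i + yB i = ∑ j ∈ Icc 1 L, (q i ⬝ᵥ k j) • v j := by
    rw [hyF, hyB, eq_sum_Icc_one_of_forward_recurrence hSF0 hSF hi,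
      eq_sum_Icc_of_backward_recurrence hSBL hSB h1 hi, mul_smul]
    simp only [vecMul_sum, vecMul_vecMulVec]
    exact sum_Icc_sub_half_add_sum_Icc_sub_half h1 hi _
  have hc : cF i + cB i = ∑ j ∈ Icc 1 L, (q i ⬝ᵥ k j) := by
    rw [hcF, hcB, eq_sum_Icc_one_of_forward_recurrence hzF0 hzF hi,
      eq_sum_Icc_of_backward_recurrence hzBL hzB h1 hi, dotProduct_sum, dotProduct_sum,
      ← smul_eq_mul]
    exact sum_Icc_sub_half_add_sum_Icc_sub_half h1 hi _
  exact ⟨hy, hc, fun _ => by rw [hy, hc]⟩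

/-- LION-lit mapping (bidirectional vanilla linear attention, `λ_i = 1`):
`y^F_i + y^B_i = Σ_{j=1}^{L} ⟨q_i, k_j⟩ v_j` and
`c^F_i + c^B_i = Σ_{j=1}^{L} ⟨q_i, k_j⟩`; hence the non-scaled stacked outputs
equal `Q K^⊤ V`, and when the row sum is nonzero the scaled output
`(y^F_i + y^B_i)/(c^F_i + c^B_i)` equals the `i`-th row of `Scale(Q K^⊤) V`. -/
theorem lion_lit_mapping
    (L d : ℕ) (hL : 0 < L) (hd : 0 < d)
    (q k v : ℕ → (Fin d → ℝ))
    (SF SB : ℕ → Matrix (Fin d) (Fin d) ℝ) (zF zB : ℕ → (Fin d → ℝ))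
    (hSF0 : SF 0 = 0)
    (hSF : ∀ i, 1 ≤ i → i ≤ L → SF i = SF (i - 1) + vecMulVec (k i) (v i))
    (hzF0 : zF 0 = 0)
    (hzF : ∀ i, 1 ≤ i → i ≤ L → zF i = zF (i - 1) + k i)
    (hSBL : SB L = vecMulVec (k L) (v L))
    (hSB : ∀ i, 1 ≤ i → i < L → SB i = SB (i + 1) + vecMulVec (k i) (v i))
    (hzBL : zB L = k L)
    (hzB : ∀ i, 1 ≤ i → i < L → zB i = zB (i + 1) + k i)
    (yF yB : ℕ → (Fin d → ℝ)) (cF cB : ℕ → ℝ)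
    (hyF : ∀ i, yF i = q i ᵥ* SF i - ((1 / 2) * (q i ⬝ᵥ k i)) • v i)
    (hyB : ∀ i, yB i = q i ᵥ* SB i - ((1 / 2) * (q i ⬝ᵥ k i)) • v i)
    (hcF : ∀ i, cF i = q i ⬝ᵥ zF i - (1 / 2) * (q i ⬝ᵥ k i))
    (hcB : ∀ i, cB i = q i ⬝ᵥ zB i - (1 / 2) * (q i ⬝ᵥ k i)) :
    ∀ i, 1 ≤ i → i ≤ L →
      yF i + yB i = ∑ j ∈ Finset.Icc 1 L, (q i ⬝ᵥ k j) • v j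
      ∧ cF i + cB i = ∑ j ∈ Finset.Icc 1 L, (q i ⬝ᵥ k j)
      ∧ ((∑ j ∈ Finset.Icc 1 L, (q i ⬝ᵥ k j)) ≠ 0 →
          (cF i + cB i)⁻¹ • (yF i + yB i) =
            (∑ j ∈ Finset.Icc 1 L, (q i ⬝ᵥ k j))⁻¹ •
              ∑ j ∈ Finset.Icc 1 L, (q i ⬝ᵥ k j) • v j) :=
  lion_lit_mapping_general L d q k v SF SB zF zB hSF0 hSF hzF0 hzF hSBL hSB hzBL hzB yF yB cF cB hyF
    hyB hcF hcB
end

section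
/- Parallel form of the causal diagonal-decay recurrence: for k = 1,…,L let a_k ∈ ℝ^d, Λ_k = diag(a_k), and define S_0 = 0 ∈ ℝ^{d×d}, S_i = Λ_i S_{i−1} + k_i v_i^⊤, y_i = (q_i^⊤ S_i)^⊤. Then for every i, y_i = Σ_{j=1}^{i} (q_i^⊤ Λ_i Λ_{i−1} ⋯ Λ_{j+1} k_j) v_j; if moreover all entries of every a_k are nonzero, then with m_i = a_1 ⊙ ⋯ ⊙ a_i one has y_i = Σ_{j=1}^{i} ⟨q_i ⊙ m_i, k_j ⊙ m_j^{∘−1}⟩ v_j, i.e., the stacked outputs equal Tril[(Q ⊙ 𝐋)(K ⊙ Inv(𝐋))^⊤] V, where 𝐋 ∈ ℝ^{L×d} has i-th row m_i, Inv is the entrywise inverse, Q ⊙ 𝐋 is the entrywise product of matrices, and Tril keeps the lower-triangular part (including the diagonal) of a matrix. -/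
open Matrix Finset

/-- `lamProd a j i = Λ_i Λ_{i-1} ⋯ Λ_{j+1}` where `Λ_t = diag (a t)`;
empty products (when `i ≤ j`) equal the identity. -/
noncomputable def lamProd {d : ℕ} (a : ℕ → Fin d → ℝ) (j : ℕ) :
    ℕ → Matrix (Fin d) (Fin d) ℝ
  | 0 => 1
  | (i + 1) => if i + 1 ≤ j then 1 else Matrix.diagonal (a (i + 1)) * lamProd a j i

/-- Forward cumulative entrywise product `m_i = a_1 ⊙ a_2 ⊙ ⋯ ⊙ a_i`
(with `m_0` the all-ones vector). -/
noncomputable def mcum {d : ℕ} (a : ℕ → Fin d → ℝ) (i : ℕ) : Fin d → ℝ :=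
  fun x => ∏ t ∈ Finset.Icc 1 i, a t x

/-!
Unrolling the recurrence gives `S_i = Σ_{j ≤ i} Λ_i ⋯ Λ_{j+1} k_j v_jᵀ`, and reading it out
against `q_i` gives the readout form. Since the `Λ_t` are diagonal, `Λ_i ⋯ Λ_{j+1}` is the
diagonal matrix of `∏_{j < t ≤ i} a_t = m_i / m_j`, which is the second form once the `m_j`
are invertible.
-/

section LamProd

variable {d : ℕ} (a : ℕ → Fin d → ℝ)

lemma lamProd_self (j : ℕ) : lamProd a j j = 1 := by
  cases j <;> simp [lamProd]

lemma lamProd_succ_of_le {i j : ℕ} (h : j ≤ i) :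
    lamProd a j (i + 1) = diagonal (a (i + 1)) * lamProd a j i :=
  if_neg (by omega)

lemma lamProd_eq_diagonal_prod {i j : ℕ} (h : j ≤ i) :
    lamProd a j i = diagonal (fun x => ∏ t ∈ Ioc j i, a t x) := by
  induction i, h using Nat.le_induction with
  | base => simp [lamProd_self]
  | succ i hji ih =>
    rw [lamProd_succ_of_le a hji, ih, diagonal_mul_diagonal]
    congr 1
    ext x
    rw [prod_Ioc_succ_top hji, mul_comm]

end LamProd

lemma mcum_eq_mul_prod_Ioc {d : ℕ} (a : ℕ → Fin d → ℝ) {i j : ℕ} (h : j ≤ i) (x : Fin d) :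
    mcum a i x = mcum a j x * ∏ t ∈ Ioc j i, a t x := by
  have Icc_one : ∀ n : ℕ, Icc 1 n = Ioc 0 n := Icc_add_one_left_eq_Ioc 0
  simp only [mcum, Icc_one]
  exact (prod_Ioc_consecutive _ j.zero_le h).symm

lemma mcum_ne_zero {d : ℕ} {a : ℕ → Fin d → ℝ} {j : ℕ} (ha : ∀ t ∈ Icc 1 j, ∀ x, a t x ≠ 0)
    (x : Fin d) : mcum a j x ≠ 0 :=
  prod_ne_zero_iff.mpr fun t ht => ha t ht x

lemma eq_sum_lamProd_mul_vecMulVec {L d : ℕ} (k v a : ℕ → Fin d → ℝ)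
    (S : ℕ → Matrix (Fin d) (Fin d) ℝ) (hS0 : S 0 = 0)
    (hS : ∀ i, 1 ≤ i → i ≤ L →
      S i = diagonal (a i) * S (i - 1) + vecMulVec (k i) (v i)) {i : ℕ} (hi : i ≤ L) :
    S i = ∑ j ∈ Icc 1 i, lamProd a j i * vecMulVec (k j) (v j) := by
  induction i with
  | zero => simp [hS0]
  | succ i ih =>
    rw [hS (i + 1) (by omega) hi, Nat.add_sub_cancel, ih (by omega), mul_sum,
      sum_Icc_succ_top (by omega), lamProd_self, one_mul]
    congr 1
    refine sum_congr rfl fun j hj => ?_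
    rw [lamProd_succ_of_le a (mem_Icc.mp hj).2, Matrix.mul_assoc]

theorem causal_diagonal_decay_parallel_form_general
    (L d : ℕ)
    (q k v : ℕ → (Fin d → ℝ)) (a : ℕ → (Fin d → ℝ))
    (S : ℕ → Matrix (Fin d) (Fin d) ℝ)
    (hS0 : S 0 = 0)
    (hS : ∀ i, 1 ≤ i → i ≤ L →
      S i = Matrix.diagonal (a i) * S (i - 1) + vecMulVec (k i) (v i)) :
    (∀ i, 1 ≤ i → i ≤ L →
        q i ᵥ* S i =
          ∑ j ∈ Finset.Icc 1 i, ((q i ᵥ* lamProd a j i) ⬝ᵥ k j) • v j)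
    ∧ ((∀ t x, 1 ≤ t → t ≤ L → a t x ≠ 0) →
        ∀ i, 1 ≤ i → i ≤ L →
          q i ᵥ* S i =
            ∑ j ∈ Finset.Icc 1 i,
              ((q i * mcum a i) ⬝ᵥ (k j * (mcum a j)⁻¹)) • v j) := by
  have readout : ∀ i, 1 ≤ i → i ≤ L →
      q i ᵥ* S i = ∑ j ∈ Icc 1 i, ((q i ᵥ* lamProd a j i) ⬝ᵥ k j) • v j := by
    intro i _ hi
    rw [eq_sum_lamProd_mul_vecMulVec k v a S hS0 hS hi, vecMul_sum]
    refine sum_congr rfl fun j _ => ?_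
    rw [← vecMul_vecMul, vecMul_vecMulVec]
  refine ⟨readout, fun ha i h1i hi => (readout i h1i hi).trans (sum_congr rfl fun j hj => ?_)⟩
  have hji : j ≤ i := (mem_Icc.mp hj).2
  have hmj : ∀ x, mcum a j x ≠ 0 :=
    mcum_ne_zero fun t ht x => ha t x (mem_Icc.mp ht).1 ((mem_Icc.mp ht).2.trans (hji.trans hi))
  congr 1
  refine sum_congr rfl fun x _ => ?_
  simp only [lamProd_eq_diagonal_prod a hji, vecMul_diagonal, Pi.mul_apply, Pi.inv_apply,
    mcum_eq_mul_prod_Ioc a hji]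
  field_simp [hmj x]

/-- Parallel form of the causal diagonal-decay recurrence: the output
`y_i = (q_i^⊤ S_i)^⊤` of `S_i = Λ_i S_{i-1} + k_i v_i^⊤` equals
`Σ_{j=1}^{i} (q_i^⊤ Λ_i ⋯ Λ_{j+1} k_j) v_j`; if all decay entries are nonzero this
is `Σ_{j=1}^{i} ⟨q_i ⊙ m_i, k_j ⊙ m_j^{∘-1}⟩ v_j`, the `i`-th row of
`Tril[(Q ⊙ 𝐋)(K ⊙ Inv(𝐋))^⊤] V`. -/
theorem causal_diagonal_decay_parallel_form
    (L d : ℕ) (hL : 0 < L) (hd : 0 < d)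
    (q k v : ℕ → (Fin d → ℝ)) (a : ℕ → (Fin d → ℝ))
    (S : ℕ → Matrix (Fin d) (Fin d) ℝ)
    (hS0 : S 0 = 0)
    (hS : ∀ i, 1 ≤ i → i ≤ L →
      S i = Matrix.diagonal (a i) * S (i - 1) + vecMulVec (k i) (v i)) :
    (∀ i, 1 ≤ i → i ≤ L →
        q i ᵥ* S i =
          ∑ j ∈ Finset.Icc 1 i, ((q i ᵥ* lamProd a j i) ⬝ᵥ k j) • v j)
    ∧ ((∀ t x, 1 ≤ t → t ≤ L → a t x ≠ 0) →
        ∀ i, 1 ≤ i → i ≤ L →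
          q i ᵥ* S i =
            ∑ j ∈ Finset.Icc 1 i,
              ((q i * mcum a i) ⬝ᵥ (k j * (mcum a j)⁻¹)) • v j) :=
  causal_diagonal_decay_parallel_form_general L d q k v a S hS0 hS
end
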